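/- arXiv:2605.02427 — 3 statements merged into one kernel-verified Lean document; each statement's English description precedes it below -/
import Mathlib

section
/- Let X_1, …, X_P be i.i.d. from a probability measure q on a finite set, let r = dπ/dq be the density of another probability measure π with respect to q, and let f be a function with sup norm at most 1. Then the self-normalized importance sampling estimator π̂^P(f) = (Σ_i r(X_i) f(X_i)) / (Σ_i r(X_i)) satisfies E|π̂^P(f) − π(f)| ≤ (4/√P)·√(1 + χ²(π‖q)) + (8/P)·χ²(π‖q). -/
/-!
Write `S = ∑ i, r (X i)` and `T = ∑ i, r (X i) * f (X i)`. Since `|T| ≤ S`, the identity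
`T / S - π f = (T / P - π f) - (T / S) * (S / P - 1)` bounds the error pointwise by
`|T / P - π f| + |S / P - 1|`. Both terms are deviations of empirical means of i.i.d. variables
whose second moment is at most `E_q[r²] = 1 + χ²`, so by Cauchy–Schwarz and the variance of a sum
of independent terms each has expectation at most `√((1 + χ²) / P)`.
-/

open Finset

lemma sq_sum_mul_le_sum_mul_sq {α : Type*} (s : Finset α) {w : α → ℝ} (Z : α → ℝ)
    (hw : ∀ a ∈ s, 0 ≤ w a) :
    (∑ a ∈ s, w a * Z a) ^ 2 ≤ (∑ a ∈ s, w a) * ∑ a ∈ s, w a * Z a ^ 2 :=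
  sum_sq_le_sum_mul_sum_of_sq_le_mul s hw (fun a ha => mul_nonneg (hw a ha) (sq_nonneg _))
    fun a _ => by ring_nf; rfl

lemma sum_mul_abs_le_sqrt_sum_mul_sq {α : Type*} (s : Finset α) {w : α → ℝ} (Z : α → ℝ)
    (hw0 : ∀ a ∈ s, 0 ≤ w a) (hw1 : ∑ a ∈ s, w a = 1) :
    ∑ a ∈ s, w a * |Z a| ≤ √(∑ a ∈ s, w a * Z a ^ 2) := by
  apply Real.le_sqrt_of_sq_le
  simpa [hw1, sq_abs] using sq_sum_mul_le_sum_mul_sq s (fun a => |Z a|) hw0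

section ProductWeights

variable {ι B : Type*} [Fintype ι] [DecidableEq ι] [Fintype B] (q : B → ℝ)

lemma sum_prod_mul_prod (h : ι → B → ℝ) :
    ∑ x : ι → B, (∏ i, q (x i)) * ∏ i, h i (x i) = ∏ i, ∑ b, q b * h i b := by
  rw [Fintype.prod_sum]
  simp_rw [prod_mul_distrib]

lemma sum_prod_eq_one (hq1 : ∑ b, q b = 1) : ∑ x : ι → B, ∏ i, q (x i) = 1 := by
  simpa [hq1] using sum_prod_mul_prod q (fun (_ : ι) (_ : B) => (1 : ℝ))

lemma sum_prod_mul_apply (hq1 : ∑ b, q b = 1) (j : ι) (g : B → ℝ) :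
    ∑ x : ι → B, (∏ i, q (x i)) * g (x j) = ∑ b, q b * g b := by
  simpa [prod_ite_eq', apply_ite, hq1] using
    sum_prod_mul_prod q (fun i b => if i = j then g b else 1)

lemma sum_prod_mul_apply_mul_apply (hq1 : ∑ b, q b = 1) {j k : ι} (hjk : j ≠ k)
    (g h : B → ℝ) :
    ∑ x : ι → B, (∏ i, q (x i)) * (g (x j) * h (x k)) =
      (∑ b, q b * g b) * ∑ b, q b * h b := by
  let e : ι → B → ℝ := fun i b => if i = j then g b else if i = k then h b else 1
  have hprod (x : ι → B) : ∏ i, e i (x i) = g (x j) * h (x k) := by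
    rw [prod_eq_mul j k hjk (fun c _ hc => by simp [e, hc.1, hc.2]) (by simp) (by simp)]
    simp [e, hjk.symm]
  have hprod_sum : ∏ i, ∑ b, q b * e i b = (∑ b, q b * g b) * ∑ b, q b * h b := by
    rw [prod_eq_mul j k hjk (fun c _ hc => by simp [e, hc.1, hc.2, hq1]) (by simp) (by simp)]
    simp [e, hjk.symm]
  simpa only [hprod, hprod_sum] using sum_prod_mul_prod q e

lemma sum_prod_mul_sq_sum_of_sum_mul_eq_zero (hq1 : ∑ b, q b = 1) {c : B → ℝ}
    (hc : ∑ b, q b * c b = 0) :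
    ∑ x : ι → B, (∏ i, q (x i)) * (∑ i, c (x i)) ^ 2 =
      Fintype.card ι * ∑ b, q b * c b ^ 2 := by
  have hdiag (j : ι) : ∑ x : ι → B, (∏ i, q (x i)) * (c (x j) * c (x j)) =
      ∑ b, q b * c b ^ 2 := by
    simp_rw [← sq]; exact sum_prod_mul_apply q hq1 j (fun b => c b ^ 2)
  have hoff {j k : ι} (hjk : j ≠ k) :
      ∑ x : ι → B, (∏ i, q (x i)) * (c (x j) * c (x k)) = 0 := by
    rw [sum_prod_mul_apply_mul_apply q hq1 hjk, hc, zero_mul]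
  simp_rw [sq (∑ i, _), sum_mul_sum, mul_sum]
  rw [sum_comm]
  simp_rw [sum_comm (γ := ι → B)]
  rw [sum_congr rfl fun j _ => sum_eq_single j (fun k _ hkj => hoff hkj.symm) (by simp)]
  simp [hdiag, mul_sum]

end ProductWeights

lemma sum_mul_sq_sub_mean_le {B : Type*} [Fintype B] {q : B → ℝ} (hq1 : ∑ b, q b = 1)
    (g : B → ℝ) :
    ∑ b, q b * (g b - ∑ b, q b * g b) ^ 2 ≤ ∑ b, q b * g b ^ 2 := by
  set m := ∑ b, q b * g b
  have hexpand (b : B) :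
      q b * (g b - m) ^ 2 = q b * g b ^ 2 - 2 * m * (q b * g b) + m ^ 2 * q b := by
    ring
  simp_rw [hexpand, sum_add_distrib, sum_sub_distrib, ← mul_sum, hq1]
  nlinarith [sq_nonneg m]

lemma sum_prod_mul_abs_sample_mean_sub_le {ι B : Type*} [Fintype ι] [DecidableEq ι]
    [Nonempty ι] [Fintype B] {q : B → ℝ} (hq0 : ∀ b, 0 ≤ q b) (hq1 : ∑ b, q b = 1)
    (g : B → ℝ) :
    ∑ x : ι → B, (∏ i, q (x i)) * |(∑ i, g (x i)) / Fintype.card ι - ∑ b, q b * g b|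
      ≤ √((∑ b, q b * g b ^ 2) / Fintype.card ι) := by
  set n : ℝ := (Fintype.card ι : ℝ) with hn_def
  set m := ∑ b, q b * g b
  have hn : 0 < n := by positivity
  have hmean (x : ι → B) : (∑ i, g (x i)) / n - m = (∑ i, (g (x i) - m)) / n := by
    rw [sum_sub_distrib, sum_const, card_univ, nsmul_eq_mul, ← hn_def]
    field_simp
  have hc : ∑ b, q b * (g b - m) = 0 := by
    simp_rw [mul_sub, sum_sub_distrib, ← sum_mul, hq1, one_mul, m, sub_self]
  calc _ ≤ √(∑ x : ι → B, (∏ i, q (x i)) * ((∑ i, g (x i)) / n - m) ^ 2) :=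
        sum_mul_abs_le_sqrt_sum_mul_sq _ _ (fun x _ => prod_nonneg fun i _ => hq0 (x i))
          (sum_prod_eq_one q hq1)
    _ = √((∑ b, q b * (g b - m) ^ 2) / n) := by
        simp_rw [hmean, div_pow, ← mul_div_assoc]
        rw [← sum_div, sum_prod_mul_sq_sum_of_sum_mul_eq_zero q hq1 hc, ← hn_def]
        congr 1
        field_simp
    _ ≤ √((∑ b, q b * g b ^ 2) / n) := by
        gcongr √(?_ / _)
        exact sum_mul_sq_sub_mean_le hq1 g

lemma abs_ite_div_sub_le {S T m n : ℝ} (hn : n ≠ 0) (hTS : |T| ≤ S) :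
    |(if S = 0 then 0 else T / S) - m| ≤ |T / n - m| + |S / n - 1| := by
  rcases eq_or_ne S 0 with hS | hS
  · have hT : T = 0 := abs_nonpos_iff.1 (hS ▸ hTS)
    simp [hS, hT]
  · have hSpos : 0 < S := lt_of_le_of_ne ((abs_nonneg T).trans hTS) hS.symm
    have hratio : |T / S| ≤ 1 := by
      rwa [abs_div, abs_of_pos hSpos, div_le_one hSpos]
    rw [if_neg hS]
    calc |T / S - m| = |(T / n - m) - T / S * (S / n - 1)| := by
          congr 1; field_simp; ring
      _ ≤ |T / n - m| + |T / S| * |S / n - 1| := by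
          rw [← abs_mul]; exact abs_sub _ _
      _ ≤ |T / n - m| + |S / n - 1| := by
          gcongr; exact mul_le_of_le_one_left (abs_nonneg _) hratio

section Density

variable {B : Type*} [Fintype B] {q pm : B → ℝ}

lemma mul_div_sq_eq_sq_div (p q : ℝ) : q * (p / q) ^ 2 = p ^ 2 / q := by
  rcases eq_or_ne q 0 with rfl | hq
  · simp
  · field_simp

lemma sum_mul_div_mul (habs : ∀ b, pm b ≠ 0 → q b ≠ 0) (g : B → ℝ) :
    ∑ b, q b * (pm b / q b * g b) = ∑ b, pm b * g b := by
  simp_rw [← mul_assoc, mul_div_cancel_of_imp' fun h => not_imp_not.1 (habs _) h]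

lemma one_le_sum_sq_div (hq0 : ∀ b, 0 ≤ q b) (hq1 : ∑ b, q b = 1) (hpm1 : ∑ b, pm b = 1)
    (habs : ∀ b, pm b ≠ 0 → q b ≠ 0) :
    1 ≤ ∑ b, pm b ^ 2 / q b := by
  have hmean : ∑ b, q b * (pm b / q b) = 1 := by
    simpa [hpm1] using sum_mul_div_mul habs fun _ => 1
  simpa [hmean, hq1, mul_div_sq_eq_sq_div] using
    sq_sum_mul_le_sum_mul_sq univ (fun b => pm b / q b) fun b _ => hq0 b

end Density

lemma sum_prod_mul_abs_snis_sub_le {ι B : Type*} [Fintype ι] [DecidableEq ι] [Nonempty ι]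
    [Fintype B] {q r f : B → ℝ} (hq0 : ∀ b, 0 ≤ q b) (hq1 : ∑ b, q b = 1)
    (hr0 : ∀ b, 0 ≤ r b) (hr1 : ∑ b, q b * r b = 1) (hf : ∀ b, |f b| ≤ 1) :
    ∑ x : ι → B, (∏ i, q (x i)) *
        |(if (∑ i, r (x i)) = 0 then 0
          else (∑ i, r (x i) * f (x i)) / (∑ i, r (x i))) - ∑ b, q b * (r b * f b)|
      ≤ 2 * √((∑ b, q b * r b ^ 2) / Fintype.card ι) := by
  have hrf (b : B) : |r b * f b| ≤ r b := by
    rw [abs_mul, abs_of_nonneg (hr0 b)]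
    exact mul_le_of_le_one_right (hr0 b) (hf b)
  have hsq_rf : ∑ b, q b * (r b * f b) ^ 2 ≤ ∑ b, q b * r b ^ 2 := sum_le_sum fun b _ =>
    mul_le_mul_of_nonneg_left (sq_abs (r b * f b) ▸ pow_le_pow_left₀ (abs_nonneg _) (hrf b) 2)
      (hq0 b)
  have hdev_rf := sum_prod_mul_abs_sample_mean_sub_le (ι := ι) hq0 hq1 (fun b => r b * f b)
  have hdev_r := sum_prod_mul_abs_sample_mean_sub_le (ι := ι) hq0 hq1 r
  rw [hr1] at hdev_r
  calc _ ≤ ∑ x : ι → B, (∏ i, q (x i)) *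
          (|(∑ i, r (x i) * f (x i)) / Fintype.card ι - ∑ b, q b * (r b * f b)| +
            |(∑ i, r (x i)) / Fintype.card ι - 1|) := by
        gcongr with x
        · exact prod_nonneg fun i _ => hq0 (x i)
        · exact abs_ite_div_sub_le (by positivity)
            ((abs_sum_le_sum_abs _ _).trans (sum_le_sum fun i _ => hrf (x i)))
    _ ≤ 2 * √((∑ b, q b * r b ^ 2) / Fintype.card ι) := by
        have hdev_rf' : _ ≤ √((∑ b, q b * r b ^ 2) / Fintype.card ι) :=
          hdev_rf.trans (by gcongr)
        simp_rw [mul_add, sum_add_distrib]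
        linarith

/-- **Bounded-test particle approximation for SNIS.**
For `X_1, …, X_P` i.i.d. from `q` (modeled by the product weights `∏ i, q (x i)`
over sample vectors `x : Fin P → B`), density `r = π/q`, and `‖f‖_∞ ≤ 1`, the
self-normalized importance sampling estimator satisfies
`E|π̂^P(f) − π(f)| ≤ (4/√P)√(1 + χ²(π‖q)) + (8/P)·χ²(π‖q)`.
The estimator is defined to be `0` on the event `Σ_i r(X_i) = 0`. -/
theorem stmt4 {B : Type*} [Fintype B] (P : ℕ) (hP : 1 ≤ P)
    (q pm : B → ℝ) (hq0 : ∀ b, 0 ≤ q b) (hq1 : ∑ b, q b = 1)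
    (hpm0 : ∀ b, 0 ≤ pm b) (hpm1 : ∑ b, pm b = 1)
    (habs : ∀ b, pm b ≠ 0 → q b ≠ 0)
    (f : B → ℝ) (hf : ∀ b, |f b| ≤ 1)
    (r : B → ℝ) (hr : ∀ b, r b = pm b / q b)
    (χ2 : ℝ) (hχ : χ2 = (∑ b, pm b ^ 2 / q b) - 1) :
    ∑ x : Fin P → B, (∏ i, q (x i)) *
        |(if (∑ i, r (x i)) = 0 then 0
          else (∑ i, r (x i) * f (x i)) / (∑ i, r (x i))) - ∑ b, pm b * f b|
      ≤ 4 / Real.sqrt P * Real.sqrt (1 + χ2) + 8 / P * χ2 := by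
  have : Nonempty (Fin P) := ⟨⟨0, hP⟩⟩
  have hr0 (b : B) : 0 ≤ r b := hr b ▸ div_nonneg (hpm0 b) (hq0 b)
  have hmean (g : B → ℝ) : ∑ b, q b * (r b * g b) = ∑ b, pm b * g b := by
    simp_rw [hr]; exact sum_mul_div_mul habs g
  have hr1 : ∑ b, q b * r b = 1 := by simpa [hpm1] using hmean 1
  have hsq_r : ∑ b, q b * r b ^ 2 = 1 + χ2 := by
    simp_rw [hr, mul_div_sq_eq_sq_div, hχ]; ring
  have hχ0 : 0 ≤ χ2 := hχ ▸ sub_nonneg.2 (one_le_sum_sq_div hq0 hq1 hpm1 habs)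
  have hsnis := sum_prod_mul_abs_snis_sub_le (ι := Fin P) hq0 hq1 hr0 hr1 hf
  rw [hmean, hsq_r, Fintype.card_fin, Real.sqrt_div' _ (Nat.cast_nonneg P)] at hsnis
  refine hsnis.trans ?_
  have : 0 ≤ √(1 + χ2) / √P := by positivity
  have : 0 ≤ 8 / P * χ2 := by positivity
  have : 4 / √P * √(1 + χ2) = 4 * (√(1 + χ2) / √P) := by ring
  linarith
end

section
/- Let π_j and q_j be probability mass functions on a finite set with q_j > 0 on the support of π_j, let ψ > 0, and define the tilted proposal q̃_j(b) = q_j(b)ψ(b) / Σ_{b'} q_j(b')ψ(b'). Writing r(b) = π_j(b)/q_j(b), the exact identity 1 + χ²(π_j‖q̃_j) = E_{q_j}[r²] − Cov_{q_j}(ψ, r²/ψ) holds. -/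
/-! Tilting by `ψ` multiplies each term `π(b)²/q(b)` by `C/ψ(b)`, where `C = E_q[ψ]`, so
`1 + χ²(π‖q̃) = C · E_q[r²/ψ]`. On the other side `ψ · (r²/ψ) = r²`, so the covariance is
`E_q[r²] − C · E_q[r²/ψ]` and the right-hand side collapses to the same quantity. -/

lemma sq_div_tilt_eq {p q ψ : ℝ} (C : ℝ) (hψ : ψ ≠ 0) (hpq : q = 0 → p = 0) :
    p ^ 2 / (q * ψ / C) = C * (q * ((p / q) ^ 2 / ψ)) := by
  by_cases hq : q = 0
  · simp [hq, hpq hq]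
  · field_simp

lemma sum_sq_div_tilt_eq {B : Type*} [Fintype B] (p q ψ : B → ℝ) (C : ℝ)
    (hψ : ∀ b, ψ b ≠ 0) (hpq : ∀ b, q b = 0 → p b = 0) :
    ∑ b, p b ^ 2 / (q b * ψ b / C) = C * ∑ b, q b * ((p b / q b) ^ 2 / ψ b) := by
  rw [Finset.mul_sum]
  exact Finset.sum_congr rfl fun b _ => sq_div_tilt_eq C (hψ b) (hpq b)

theorem stmt8_general {B : Type*} [Fintype B]
    (pm q ψ : B → ℝ)
    (hpm0 : ∀ b, 0 ≤ pm b)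
    (habs : ∀ b, 0 < pm b → 0 < q b)
    (hψ : ∀ b, 0 < ψ b)
    (r : B → ℝ) (hr : ∀ b, r b = pm b / q b)
    (C : ℝ) (hC : C = ∑ b, q b * ψ b)
    (qt : B → ℝ) (hqt : ∀ b, qt b = q b * ψ b / C) :
    1 + ((∑ b, pm b ^ 2 / qt b) - 1)
      = (∑ b, q b * r b ^ 2)
        - ((∑ b, q b * (ψ b * (r b ^ 2 / ψ b)))
            - (∑ b, q b * ψ b) * (∑ b, q b * (r b ^ 2 / ψ b))) := by
  have hψ_ne (b : B) : ψ b ≠ 0 := (hψ b).ne'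
  have hsupp (b : B) (hq : q b = 0) : pm b = 0 :=
    (hpm0 b).eq_or_lt.elim Eq.symm fun hp => absurd hq (habs b hp).ne'
  have hchi : ∑ b, pm b ^ 2 / qt b = C * ∑ b, q b * (r b ^ 2 / ψ b) := by
    simp only [hqt, hr]
    exact sum_sq_div_tilt_eq pm q ψ C hψ_ne hsupp
  have hcancel (b : B) : ψ b * (r b ^ 2 / ψ b) = r b ^ 2 := mul_div_cancel₀ _ (hψ_ne b)
  simp only [hchi, hcancel, ← hC]
  ring

/-- **Exact χ² identity for the ψ-tilted proposal.**
With `q̃(b) = q(b)ψ(b)/Σ_{b'} q(b')ψ(b')` and `r = π/q`,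
`1 + χ²(π‖q̃) = E_q[r²] − Cov_q(ψ, r²/ψ)`. -/
theorem stmt8 {B : Type*} [Fintype B]
    (pm q ψ : B → ℝ)
    (hpm0 : ∀ b, 0 ≤ pm b) (hpm1 : ∑ b, pm b = 1)
    (hq0 : ∀ b, 0 ≤ q b) (hq1 : ∑ b, q b = 1)
    (habs : ∀ b, 0 < pm b → 0 < q b)
    (hψ : ∀ b, 0 < ψ b)
    (r : B → ℝ) (hr : ∀ b, r b = pm b / q b)
    (C : ℝ) (hC : C = ∑ b, q b * ψ b)
    (qt : B → ℝ) (hqt : ∀ b, qt b = q b * ψ b / C) :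
    1 + ((∑ b, pm b ^ 2 / qt b) - 1)
      = (∑ b, q b * r b ^ 2)
        - ((∑ b, q b * (ψ b * (r b ^ 2 / ψ b)))
            - (∑ b, q b * ψ b) * (∑ b, q b * (r b ^ 2 / ψ b))) :=
  stmt8_general pm q ψ hpm0 habs hψ r hr C hC qt hqt
end

section
/- With the tilted proposal q̃_j(b) ∝ q_j(b)ψ(b) and r = π_j/q_j, one has χ²(π_j‖q̃_j) < χ²(π_j‖q_j) if and only if Cov_{q_j}(ψ, r²/ψ) > 0. -/
/-!
Multiplying the summand `π²/q̃ = π² S/(qψ)`, where `S = E_q[ψ]`, by `q/q` shows `χ²(π‖q̃) + 1 = E_q[ψ] · E_q[r²/ψ]`, while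
`χ²(π‖q) + 1 = E_q[r²] = E_q[ψ · r²/ψ]`. So the gap `χ²(π‖q) - χ²(π‖q̃)` is exactly `Cov_q(ψ, r²/ψ)`.
-/

open Finset

namespace ImportanceSampling

variable {ι K : Type*} [Fintype ι] [Field K]

/-- With division by zero read as `0`, points outside the support of `q` contribute nothing. -/
def chiSq (p q : ι → K) : K := ∑ b, p b ^ 2 / q b - 1

def tilt (q ψ : ι → K) (b : ι) : K := q b * ψ b / ∑ b', q b' * ψ b'

def cov (q f g : ι → K) : K :=
  ∑ b, q b * (f b * g b) - (∑ b, q b * f b) * ∑ b, q b * g b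

lemma mul_div_sq_self (p q : K) : q * (p / q) ^ 2 = p ^ 2 / q := by
  rcases eq_or_ne q 0 with rfl | hq
  · simp
  · field_simp

lemma sq_div_div_mul (p q ψ S : K) : p ^ 2 / (q * ψ / S) = S * (q * ((p / q) ^ 2 / ψ)) := by
  rcases eq_or_ne q 0 with rfl | hq
  · simp
  · rw [div_div_eq_mul_div]
    field_simp

lemma chiSq_tilt (p q ψ : ι → K) :
    chiSq p (tilt q ψ) = (∑ b, q b * ψ b) * (∑ b, q b * ((p b / q b) ^ 2 / ψ b)) - 1 := by
  simp only [chiSq, tilt, sq_div_div_mul, mul_sum]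

lemma chiSq_sub_chiSq_tilt (p q ψ : ι → K) (hψ : ∀ b, ψ b ≠ 0) :
    chiSq p q - chiSq p (tilt q ψ) = cov q ψ (fun b => (p b / q b) ^ 2 / ψ b) := by
  have hcancel : ∀ b, ψ b * ((p b / q b) ^ 2 / ψ b) = (p b / q b) ^ 2 := fun b =>
    mul_div_cancel₀ _ (hψ b)
  rw [chiSq_tilt, chiSq, cov]
  simp only [hcancel, mul_div_sq_self]
  ring

end ImportanceSampling

open ImportanceSampling in
theorem stmt9_general {B : Type*} [Fintype B]
    (pm q ψ : B → ℝ)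
    (hψ : ∀ b, 0 < ψ b)
    (r : B → ℝ) (hr : ∀ b, r b = pm b / q b)
    (qt : B → ℝ) (hqt : ∀ b, qt b = q b * ψ b / ∑ b', q b' * ψ b') :
    ((∑ b, pm b ^ 2 / qt b) - 1 < (∑ b, pm b ^ 2 / q b) - 1)
      ↔ 0 < (∑ b, q b * (ψ b * (r b ^ 2 / ψ b)))
            - (∑ b, q b * ψ b) * (∑ b, q b * (r b ^ 2 / ψ b)) := by
  obtain rfl : r = fun b => pm b / q b := funext hr
  obtain rfl : qt = tilt q ψ := funext hqt
  change chiSq pm (tilt q ψ) < chiSq pm q ↔ 0 < cov q ψ (fun b => (pm b / q b) ^ 2 / ψ b)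
  rw [← chiSq_sub_chiSq_tilt pm q ψ fun b => (hψ b).ne', sub_pos]

/-- **Strict variance reduction iff positive covariance.**
With the tilted proposal `q̃(b) ∝ q(b)ψ(b)` and `r = π/q`,
`χ²(π‖q̃) < χ²(π‖q)` if and only if `Cov_q(ψ, r²/ψ) > 0`. -/
theorem stmt9 {B : Type*} [Fintype B]
    (pm q ψ : B → ℝ)
    (hpm0 : ∀ b, 0 ≤ pm b) (hpm1 : ∑ b, pm b = 1)
    (hq0 : ∀ b, 0 ≤ q b) (hq1 : ∑ b, q b = 1)
    (habs : ∀ b, 0 < pm b → 0 < q b)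
    (hψ : ∀ b, 0 < ψ b)
    (r : B → ℝ) (hr : ∀ b, r b = pm b / q b)
    (qt : B → ℝ) (hqt : ∀ b, qt b = q b * ψ b / ∑ b', q b' * ψ b') :
    ((∑ b, pm b ^ 2 / qt b) - 1 < (∑ b, pm b ^ 2 / q b) - 1)
      ↔ 0 < (∑ b, q b * (ψ b * (r b ^ 2 / ψ b)))
            - (∑ b, q b * ψ b) * (∑ b, q b * (r b ^ 2 / ψ b)) :=
  stmt9_general pm q ψ hψ r hr qt hqt
end
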